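/- arXiv:1108.0484 — 6 statements merged into one kernel-verified Lean document; each statement's English description precedes it below -/
import Mathlib

section
/- Let g₁,...,g_n be vectors in ℝ^r whose convex hull contains 0 in its interior. Then the problem of maximizing ∏_{i=1}^n p_i subject to p_i > 0, ∑ p_i = 1, and ∑ p_i g_i = 0 has a solution of the form p_i = 1/(n(1 + λ^T g_i)) for some λ ∈ ℝ^r with 1 + λ^T g_i > 0 for all i and ∑_{i=1}^n g_i/(1 + λ^T g_i) = 0. -/
open Finset Topology Filter


theorem el_exists_lam {n r : ℕ} (hn : 0 < n) (g : Fin n → (Fin r → ℝ))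
    (hhull : (0 : Fin r → ℝ) ∈ interior (convexHull ℝ (Set.range g))) :
    ∃ lam : Fin r → ℝ, (∀ i, 0 < 1 + ∑ j, lam j * g i j) ∧
      (∀ c, ∑ i, (1 + ∑ j, lam j * g i j)⁻¹ * g i c = 0) := by
  classical
  obtain ⟨ε, hε, hball⟩ : ∃ ε > 0, Metric.ball (0 : Fin r → ℝ) ε ⊆ convexHull ℝ (Set.range g) := by
    rcases Metric.mem_nhds_iff.1 (mem_interior_iff_mem_nhds.1 hhull) with ⟨ε, hε, h⟩
    exact ⟨ε, hε, h⟩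
  set C : Set (Fin r → ℝ) := {x | ∀ i, 0 ≤ 1 + ∑ j, x j * g i j} with hC
  set P : (Fin r → ℝ) → ℝ := fun x => ∏ i, (1 + ∑ j, x j * g i j) with hP
  have hPcont : Continuous P := by
    apply continuous_finset_prod
    intro i _
    exact continuous_const.add (continuous_finset_sum _ fun j _ =>
      (continuous_apply j).mul continuous_const)
  have hCsub : C ⊆ Metric.closedBall 0 (2 / ε) := by
    intro x hx
    rw [Metric.mem_closedBall, dist_zero_right]
    rcases eq_or_ne x 0 with rfl | hx0
    · simp only [norm_zero]; positivity
    · have hxn : 0 < ‖x‖ := norm_pos_iff.2 hx0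
      have hr : 0 < r := by
        rcases Nat.eq_zero_or_pos r with hr | hr
        · exfalso; apply hx0; subst hr; exact Subsingleton.elim x 0
        · exact hr
      haveI : Nonempty (Fin r) := ⟨⟨0, hr⟩⟩
      set c : ℝ := ε / 2 / ‖x‖ with hcdef
      have hc0 : 0 < c := by positivity
      have hc : c * ‖x‖ = ε / 2 := div_mul_cancel₀ _ hxn.ne'
      set y : Fin r → ℝ := (-c) • x with hy
      have hyb : y ∈ Metric.ball (0 : Fin r → ℝ) ε := by
        simp only [Metric.mem_ball, dist_zero_right, hy, norm_smul, norm_neg]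
        rw [Real.norm_eq_abs, abs_of_nonneg hc0.le, hc]
        linarith
      have hlin : IsLinearMap ℝ (fun z : Fin r → ℝ => ∑ j, x j * z j) := by
        constructor
        · intro a b; rw [← Finset.sum_add_distrib]
          exact Finset.sum_congr rfl fun j _ => by simp [mul_add]
        · intro d a
          simp only [smul_eq_mul, Pi.smul_apply, Finset.mul_sum]
          exact Finset.sum_congr rfl fun j _ => by ring
      have hhalf : convexHull ℝ (Set.range g) ⊆ {z | (-1 : ℝ) ≤ ∑ j, x j * z j} := by
        apply convexHull_min _ (convex_halfSpace_ge hlin _)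
        rintro _ ⟨i, rfl⟩
        have := hx i
        simp only [Set.mem_setOf_eq]
        linarith
      have hxy : ∑ j, x j * y j = -c * ∑ j, x j * x j := by
        rw [Finset.mul_sum]
        exact Finset.sum_congr rfl fun j _ => by simp [hy]; ring
      have hnx2 : ‖x‖ ^ 2 ≤ ∑ j, x j * x j := by
        obtain ⟨j, hj⟩ : ∃ j, ‖x‖ = |x j| := by
          rcases Finite.exists_max (fun j => |x j|) with ⟨j, hj⟩
          refine ⟨j, le_antisymm ?_ ?_⟩
          · exact (pi_norm_le_iff_of_nonneg (abs_nonneg _)).2 fun k => by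
              simpa [Real.norm_eq_abs] using hj k
          · simpa [Real.norm_eq_abs] using norm_le_pi_norm x j
        calc ‖x‖ ^ 2 = x j * x j := by rw [hj, sq_abs, sq]
          _ ≤ ∑ k, x k * x k := Finset.single_le_sum (f := fun k => x k * x k) (fun k _ => mul_self_nonneg _) (mem_univ j)
      have hm : (-1 : ℝ) ≤ ∑ j, x j * y j := hhalf (hball hyb)
      rw [hxy] at hm
      rw [le_div_iff₀ hε, mul_comm]
      nlinarith [mul_le_mul_of_nonneg_left hnx2 hc0.le, hc, hm, sq_nonneg ‖x‖]
  have hCclosed : IsClosed C := by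
    have : C = ⋂ i, {x : Fin r → ℝ | 0 ≤ 1 + ∑ j, x j * g i j} := by
      ext x; simp [hC, Set.mem_iInter]
    rw [this]
    exact isClosed_iInter fun i => isClosed_le continuous_const
      (continuous_const.add (continuous_finset_sum _ fun j _ =>
        (continuous_apply j).mul continuous_const))
  have hCcomp : IsCompact C :=
    (isCompact_closedBall _ _).of_isClosed_subset hCclosed hCsub
  have h0C : (0 : Fin r → ℝ) ∈ C := by intro i; simp
  obtain ⟨lam, hlamC, hmax⟩ := hCcomp.exists_isMaxOn ⟨0, h0C⟩ hPcont.continuousOn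
  have hP1 : (1 : ℝ) ≤ P lam := by
    have := hmax h0C
    simpa [hP] using this
  have hpos : ∀ i, 0 < 1 + ∑ j, lam j * g i j := by
    intro i
    rcases lt_or_eq_of_le (hlamC i) with h | h
    · exact h
    · exfalso
      have : P lam = 0 := Finset.prod_eq_zero (mem_univ i) h.symm
      rw [this] at hP1; linarith
  refine ⟨lam, hpos, ?_⟩
  -- lam is a local max of P
  have hDopen : IsOpen {x : Fin r → ℝ | ∀ i, 0 < 1 + ∑ j, x j * g i j} := by
    have : {x : Fin r → ℝ | ∀ i, 0 < 1 + ∑ j, x j * g i j}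
        = ⋂ i, {x : Fin r → ℝ | 0 < 1 + ∑ j, x j * g i j} := by
      ext x; simp [Set.mem_iInter]
    rw [this]
    exact isOpen_iInter_of_finite fun i => isOpen_lt continuous_const
      (continuous_const.add (continuous_finset_sum _ fun j _ =>
        (continuous_apply j).mul continuous_const))
  have hCn : C ∈ 𝓝 lam := by
    apply Filter.mem_of_superset (hDopen.mem_nhds hpos)
    intro x hx i
    exact (hx i).le
  have hlocal : IsLocalMax P lam := hmax.isLocalMax hCn
  -- directional derivatives vanish
  intro c
  set a : Fin n → ℝ := fun i => 1 + ∑ j, lam j * g i j with ha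
  set v : Fin r → ℝ := Pi.single c (1:ℝ) with hv
  have hkey : ∀ t : ℝ, P (lam + t • v) = ∏ i, (a i + t * g i c) := by
    intro t
    simp only [hP]
    refine Finset.prod_congr rfl fun i _ => ?_
    have : ∑ j, (lam + t • v) j * g i j
        = (∑ j, lam j * g i j) + t * g i c := by
      have h1 : ∀ j, (lam + t • v) j * g i j
          = lam j * g i j + t * (v j * g i j) := by
        intro j
        simp only [Pi.add_apply, Pi.smul_apply, smul_eq_mul]
        ring
      rw [Finset.sum_congr rfl fun j _ => h1 j, Finset.sum_add_distrib, ← Finset.mul_sum]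
      congr 1
      congr 1
      rw [Finset.sum_eq_single c]
      · simp [hv]
      · intro b _ hb; simp [hv, Pi.single_apply, hb]
      · simp
    rw [this, ha]; ring
  have hφmax : IsLocalMax (fun t : ℝ => ∏ i, (a i + t * g i c)) 0 := by
    have hcont : ContinuousAt (fun t : ℝ => lam + t • v) 0 := by
      fun_prop
    have hφ0 : IsLocalMax P (lam + (0:ℝ) • v) := by simpa using hlocal
    have := IsLocalMax.comp_continuous (g := fun t : ℝ => lam + t • v) (b := (0:ℝ)) hφ0 hcont
    have heq : (P ∘ fun t : ℝ => lam + t • v)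
        = fun t : ℝ => ∏ i, (a i + t * g i c) := funext fun t => hkey t
    rwa [heq] at this
  have hder : HasDerivAt (fun t : ℝ => ∏ i, (a i + t * g i c))
      (∑ i, (∏ k ∈ univ.erase i, (a k + 0 * g k c)) • g i c) 0 := by
    apply HasDerivAt.fun_finsetProd
    intro i _
    exact (hasDerivAt_mul_const (g i c)).const_add (a i)
  have hzero : (∑ i, (∏ k ∈ univ.erase i, a k) * g i c) = 0 := by
    have h0 := hφmax.deriv_eq_zero
    have h1 := hder.deriv
    rw [h0] at h1
    simpa [smul_eq_mul] using h1.symm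
  -- divide by ∏ a
  have hQ : 0 < ∏ i, a i := Finset.prod_pos fun i _ => hpos i
  have hinv : ∀ i : Fin n, (a i)⁻¹ = (∏ k ∈ univ.erase i, a k) * (∏ i, a i)⁻¹ := by
    intro i
    have hprod : (∏ k ∈ univ.erase i, a k) * a i = ∏ k, a k :=
      Finset.prod_erase_mul univ a (mem_univ i)
    have he : 0 < ∏ k ∈ univ.erase i, a k := Finset.prod_pos fun k _ => hpos k
    rw [← hprod, mul_inv, ← mul_assoc, mul_inv_cancel₀ he.ne', one_mul]
  calc ∑ i, (a i)⁻¹ * g i c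
      = ∑ i, (∏ k ∈ univ.erase i, a k) * g i c * (∏ k, a k)⁻¹ := by
        refine Finset.sum_congr rfl fun i _ => ?_
        rw [hinv i]; ring
    _ = (∑ i, (∏ k ∈ univ.erase i, a k) * g i c) * (∏ k, a k)⁻¹ := by
        rw [← Finset.sum_mul]
    _ = 0 := by rw [hzero, zero_mul]

/-- Empirical likelihood Lagrange multiplier representation: if 0 is interior to the convex
hull of g₁,...,g_n ⊂ ℝʳ, then maximizing ∏ pᵢ subject to pᵢ > 0, ∑ pᵢ = 1, ∑ pᵢ gᵢ = 0 has a
solution pᵢ = 1/(n(1 + λᵀgᵢ)) with 1 + λᵀgᵢ > 0 for all i and ∑ gᵢ/(1 + λᵀgᵢ) = 0. -/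
theorem stmt2 {n r : ℕ} (hn : 0 < n) (g : Fin n → (Fin r → ℝ))
    (hhull : (0 : Fin r → ℝ) ∈ interior (convexHull ℝ (Set.range g))) :
    ∃ (lam : Fin r → ℝ) (p : Fin n → ℝ),
      (∀ i, 0 < 1 + ∑ j, lam j * g i j) ∧
      (∀ i, p i = 1 / (n * (1 + ∑ j, lam j * g i j))) ∧
      (∑ i, (1 + ∑ j, lam j * g i j)⁻¹ • g i = 0) ∧
      (∀ i, 0 < p i) ∧ (∑ i, p i = 1) ∧ (∑ i, p i • g i = 0) ∧
      (∀ q : Fin n → ℝ, (∀ i, 0 < q i) → (∑ i, q i = 1) → (∑ i, q i • g i = 0) →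
        ∏ i, q i ≤ ∏ i, p i) := by
  obtain ⟨lam, hpos, heq⟩ := el_exists_lam hn g hhull
  set a : Fin n → ℝ := fun i => 1 + ∑ j, lam j * g i j with ha
  have hnR : (0:ℝ) < n := Nat.cast_pos.2 hn
  set p : Fin n → ℝ := fun i => 1 / (n * a i) with hp
  have hppos : ∀ i, 0 < p i := fun i => by
    have := hpos i; simp only [hp, one_div]; positivity
  -- sum of inverses is n
  have hS : ∑ i, (a i)⁻¹ = n := by
    have h1 : ∀ i : Fin n, (a i)⁻¹ = 1 - ∑ j, lam j * ((a i)⁻¹ * g i j) := by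
      intro i
      have hane : (a i) ≠ 0 := (hpos i).ne'
      have hinv : (a i)⁻¹ * a i = 1 := inv_mul_cancel₀ hane
      have hsum : ∑ j, lam j * ((a i)⁻¹ * g i j) = (a i)⁻¹ * ∑ j, lam j * g i j := by
        rw [Finset.mul_sum]; exact Finset.sum_congr rfl fun j _ => by ring
      rw [hsum]
      have : (a i) = 1 + ∑ j, lam j * g i j := rfl
      nlinarith [hinv]
    rw [Finset.sum_congr rfl fun i _ => h1 i, Finset.sum_sub_distrib]
    have : ∑ i : Fin n, ∑ j, lam j * ((a i)⁻¹ * g i j) = 0 := by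
      rw [Finset.sum_comm]
      refine Finset.sum_eq_zero fun j _ => ?_
      have : ∑ i : Fin n, lam j * ((a i)⁻¹ * g i j) = lam j * ∑ i, (a i)⁻¹ * g i j := by
        rw [Finset.mul_sum]
      rw [this, heq j, mul_zero]
    rw [this]
    simp
  refine ⟨lam, p, hpos, fun i => rfl, ?_, hppos, ?_, ?_, ?_⟩
  · funext c
    rw [Finset.sum_apply]
    have : ∀ i : Fin n, ((a i)⁻¹ • g i) c = (a i)⁻¹ * g i c := fun i => rfl
    rw [Finset.sum_congr rfl fun i _ => this i, heq c]
    rfl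
  · have : ∀ i : Fin n, p i = (n:ℝ)⁻¹ * (a i)⁻¹ := by
      intro i; rw [hp]; simp [one_div, mul_inv]; ring
    rw [Finset.sum_congr rfl fun i _ => this i, ← Finset.mul_sum, hS,
      inv_mul_cancel₀ hnR.ne']
  · funext c
    rw [Finset.sum_apply]
    have h2 : ∀ i : Fin n, (p i • g i) c = (n:ℝ)⁻¹ * ((a i)⁻¹ * g i c) := by
      intro i
      have : (p i • g i) c = p i * g i c := rfl
      rw [this, hp]; simp [one_div, mul_inv]; ring
    rw [Finset.sum_congr rfl fun i _ => h2 i, ← Finset.mul_sum, heq c, mul_zero]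
    rfl
  · intro q hq hq1 hqg
    have hqgc : ∀ c, ∑ i, q i * g i c = 0 := by
      intro c
      have := congrFun hqg c
      rw [Finset.sum_apply] at this
      simpa using this
    -- ∑ q i / p i = n
    have hratio : ∑ i, q i / p i = n := by
      have h1 : ∀ i : Fin n, q i / p i = n * (q i * a i) := by
        intro i
        rw [hp]
        field_simp
      rw [Finset.sum_congr rfl fun i _ => h1 i, ← Finset.mul_sum]
      have h2 : ∑ i, q i * a i = 1 := by
        have h3 : ∀ i : Fin n, q i * a i = q i + ∑ j, lam j * (q i * g i j) := by
          intro i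
          have haeq : a i = 1 + ∑ j, lam j * g i j := rfl
          rw [haeq, mul_add, mul_one, Finset.mul_sum]
          congr 1
          exact Finset.sum_congr rfl fun j _ => by ring
        rw [Finset.sum_congr rfl fun i _ => h3 i, Finset.sum_add_distrib, hq1]
        have : ∑ i : Fin n, ∑ j, lam j * (q i * g i j) = 0 := by
          rw [Finset.sum_comm]
          refine Finset.sum_eq_zero fun j _ => ?_
          have : ∑ i : Fin n, lam j * (q i * g i j) = lam j * ∑ i, q i * g i j := by
            rw [Finset.mul_sum]
          rw [this, hqgc j, mul_zero]
        rw [this, add_zero]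
      rw [h2, mul_one]
    -- log inequality
    have hlog : ∑ i, Real.log (q i) ≤ ∑ i, Real.log (p i) := by
      have h1 : ∀ i : Fin n, Real.log (q i) - Real.log (p i) ≤ q i / p i - 1 := by
        intro i
        have := Real.log_le_sub_one_of_pos (div_pos (hq i) (hppos i))
        rwa [Real.log_div (hq i).ne' (hppos i).ne'] at this
      have h2 : ∑ i, (Real.log (q i) - Real.log (p i)) ≤ ∑ i, (q i / p i - 1) :=
        Finset.sum_le_sum fun i _ => h1 i
      rw [Finset.sum_sub_distrib, Finset.sum_sub_distrib, hratio] at h2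
      simp at h2
      linarith
    calc ∏ i, q i = Real.exp (∑ i, Real.log (q i)) := by
          rw [Real.exp_sum]
          exact (Finset.prod_congr rfl fun i _ => (Real.exp_log (hq i)).symm)
      _ ≤ Real.exp (∑ i, Real.log (p i)) := Real.exp_le_exp.2 hlog
      _ = ∏ i, p i := by
          rw [Real.exp_sum]
          exact Finset.prod_congr rfl fun i _ => Real.exp_log (hppos i)
end

section
/- Under the constraints p_i ≥ 0, ∑_{i=1}^n p_i = 1, ∑_{i=1}^n p_i g_i = 0, if 0 lies in the interior of the convex hull of {g_1,...,g_n} ⊂ ℝ^r, then the maximizer of ∏ p_i over the constraint set exists and is unique. -/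
open Finset

private lemma exists_weights {n r : ℕ} (g : Fin n → (Fin r → ℝ)) {x : Fin r → ℝ}
    (hx : x ∈ convexHull ℝ (Set.range g)) :
    ∃ w : Fin n → ℝ, (∀ i, 0 ≤ w i) ∧ (∑ i, w i = 1) ∧ (∑ i, w i • g i = x) := by
  classical
  rw [convexHull_range_eq_exists_affineCombination] at hx
  obtain ⟨s, w, hw0, hw1, hwx⟩ := hx
  rw [Finset.affineCombination_eq_linear_combination s g w hw1] at hwx
  refine ⟨fun i => if i ∈ s then w i else 0, ?_, ?_, ?_⟩
  · intro i
    by_cases h : i ∈ s <;> simp [h]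
    exact hw0 _ h
  · rw [Finset.sum_ite_mem, Finset.univ_inter]; exact hw1
  · rw [← hwx]
    have : ∀ i, (if i ∈ s then w i else 0) • g i = (if i ∈ s then w i • g i else 0) := by
      intro i; by_cases h : i ∈ s <;> simp [h]
    rw [Finset.sum_congr rfl fun i _ => this i, Finset.sum_ite_mem, Finset.univ_inter]

/-- there is a strictly positive feasible point -/
private lemma sum_div_smul {n r : ℕ} (g : Fin n → Fin r → ℝ) (a : Fin n → ℝ) (d : ℝ) :
    ∑ i, (a i / d) • g i = d⁻¹ • ∑ i, a i • g i := by
  rw [Finset.smul_sum]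
  exact Finset.sum_congr rfl fun i _ => by rw [div_eq_inv_mul, mul_smul]

private lemma sum_add_smul {n r : ℕ} (g : Fin n → Fin r → ℝ) (a b : Fin n → ℝ) :
    ∑ i, (a i + b i) • g i = (∑ i, a i • g i) + ∑ i, b i • g i := by
  rw [← Finset.sum_add_distrib]
  exact Finset.sum_congr rfl fun i _ => by rw [add_smul]

private lemma exists_pos_feasible {n r : ℕ} (hn : 0 < n) (g : Fin n → (Fin r → ℝ))
    (hhull : (0 : Fin r → ℝ) ∈ interior (convexHull ℝ (Set.range g))) :
    ∃ p : Fin n → ℝ, (∀ i, 0 < p i) ∧ (∑ i, p i = 1) ∧ (∑ i, p i • g i = 0) := by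
  classical
  set c : Fin r → ℝ := ∑ i, g i with hc
  clear_value c
  -- find t > 0 with (-t) • c ∈ convexHull
  have hnhds : convexHull ℝ (Set.range g) ∈ nhds (0 : Fin r → ℝ) :=
    mem_interior_iff_mem_nhds.1 hhull
  have hcont : Filter.Tendsto (fun t : ℝ => (-t) • c) (nhds 0) (nhds (0 : Fin r → ℝ)) := by
    have : Continuous (fun t : ℝ => (-t) • c) := by continuity
    have h0 : (fun t : ℝ => (-t) • c) 0 = 0 := by simp
    simpa [h0] using this.tendsto 0
  have hev : ∀ᶠ t in nhds (0 : ℝ), (-t) • c ∈ convexHull ℝ (Set.range g) :=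
    hcont.eventually_mem hnhds
  have hev' : ∀ᶠ t in nhdsWithin (0 : ℝ) (Set.Ioi 0),
      (-t) • c ∈ convexHull ℝ (Set.range g) := hev.filter_mono nhdsWithin_le_nhds
  obtain ⟨t, htmem, ht⟩ := (hev'.and self_mem_nhdsWithin).exists
  obtain ⟨b, hb0, hb1, hbg⟩ := exists_weights g htmem
  have htpos : (0:ℝ) < t := ht
  have hden : (0:ℝ) < n * t + 1 := by positivity
  refine ⟨fun i => (t + b i) / (n * t + 1), ?_, ?_, ?_⟩
  · intro i
    exact div_pos (by linarith [hb0 i]) hden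
  · rw [← Finset.sum_div]
    rw [Finset.sum_add_distrib, hb1, Finset.sum_const, Finset.card_univ, Fintype.card_fin]
    field_simp
    rw [nsmul_eq_mul]
  · rw [sum_div_smul g (fun i => t + b i) (n * t + 1), sum_add_smul g (fun _ => t) b, hbg]
    have hts : ∑ i : Fin n, t • g i = t • c := by rw [← Finset.smul_sum, hc]
    rw [hts]
    have : t • c + -t • c = 0 := by rw [← add_smul]; simp
    rw [this, smul_zero]

/-- If 0 lies in the interior of the convex hull of {g₁,...,g_n} ⊂ ℝʳ, then the maximizer of
∏ pᵢ over {p : pᵢ ≥ 0, ∑ pᵢ = 1, ∑ pᵢ gᵢ = 0} exists and is unique. -/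
theorem stmt3 {n r : ℕ} (hn : 0 < n) (g : Fin n → (Fin r → ℝ))
    (hhull : (0 : Fin r → ℝ) ∈ interior (convexHull ℝ (Set.range g))) :
    ∃! p : Fin n → ℝ,
      ((∀ i, 0 ≤ p i) ∧ (∑ i, p i = 1) ∧ (∑ i, p i • g i = 0)) ∧
      (∀ q : Fin n → ℝ, (∀ i, 0 ≤ q i) → (∑ i, q i = 1) → (∑ i, q i • g i = 0) →
        ∏ i, q i ≤ ∏ i, p i) := by
  classical
  set K : Set (Fin n → ℝ) :=
    {p | (∀ i, 0 ≤ p i) ∧ (∑ i, p i = 1) ∧ (∑ i, p i • g i = 0)} with hK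
  obtain ⟨w, hw0, hw1, hwg⟩ := exists_pos_feasible hn g hhull
  have hwK : w ∈ K := ⟨fun i => (hw0 i).le, hw1, hwg⟩
  -- K is compact
  have hKclosed : IsClosed K := by
    have h1 : IsClosed {p : Fin n → ℝ | ∀ i, 0 ≤ p i} := by
      have : {p : Fin n → ℝ | ∀ i, 0 ≤ p i} = ⋂ i, {p | 0 ≤ p i} := by
        ext p; simp
      rw [this]
      exact isClosed_iInter fun i => isClosed_le continuous_const (continuous_apply i)
    have h2 : IsClosed {p : Fin n → ℝ | ∑ i, p i = 1} :=
      isClosed_eq (by continuity) continuous_const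
    have h3 : IsClosed {p : Fin n → ℝ | ∑ i, p i • g i = 0} :=
      isClosed_eq (by continuity) continuous_const
    have : K = {p : Fin n → ℝ | ∀ i, 0 ≤ p i} ∩
        ({p | ∑ i, p i = 1} ∩ {p | ∑ i, p i • g i = 0}) := by
      ext p; simp [hK, and_assoc]
    rw [this]
    exact h1.inter (h2.inter h3)
  have hKcpt : IsCompact K := by
    refine IsCompact.of_isClosed_subset (isCompact_Icc (a := (0 : Fin n → ℝ)) (b := 1))
      hKclosed ?_
    rintro p ⟨hp0, hp1, -⟩
    constructor
    · intro i; exact hp0 i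
    · intro i
      calc p i ≤ ∑ j, p j := Finset.single_le_sum (fun j _ => hp0 j) (Finset.mem_univ i)
      _ = 1 := hp1
  -- existence of a maximizer
  have hcontP : Continuous (fun p : Fin n → ℝ => ∏ i, p i) := by continuity
  obtain ⟨p, hpK, hpmax⟩ := hKcpt.exists_isMaxOn ⟨w, hwK⟩ hcontP.continuousOn
  obtain ⟨hp0, hp1, hpg⟩ := hpK
  have hmax : ∀ q : Fin n → ℝ, (∀ i, 0 ≤ q i) → (∑ i, q i = 1) → (∑ i, q i • g i = 0) →
      ∏ i, q i ≤ ∏ i, p i := fun q hq0 hq1 hqg => hpmax ⟨hq0, hq1, hqg⟩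
  -- the max value is positive
  have hwprod : 0 < ∏ i, w i := Finset.prod_pos fun i _ => hw0 i
  have hpprod : 0 < ∏ i, p i := lt_of_lt_of_le hwprod (hpmax hwK)
  have hppos : ∀ i, 0 < p i := by
    intro i
    rcases (hp0 i).lt_or_eq with h | h
    · exact h
    · exfalso
      have : ∏ j, p j = 0 := Finset.prod_eq_zero (Finset.mem_univ i) h.symm
      rw [this] at hpprod; exact lt_irrefl 0 hpprod
  refine ⟨p, ⟨⟨hp0, hp1, hpg⟩, hmax⟩, ?_⟩
  -- uniqueness
  rintro q ⟨⟨hq0, hq1, hqg⟩, hqmax⟩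
  have hqp : ∏ i, q i = ∏ i, p i :=
    le_antisymm (hmax q hq0 hq1 hqg) (hqmax p hp0 hp1 hpg)
  have hqpos : ∀ i, 0 < q i := by
    intro i
    rcases (hq0 i).lt_or_eq with h | h
    · exact h
    · exfalso
      have : ∏ j, q j = 0 := Finset.prod_eq_zero (Finset.mem_univ i) h.symm
      rw [hqp] at this
      rw [this] at hpprod; exact lt_irrefl 0 hpprod
  by_contra hne
  have hdiff : ∃ i, q i ≠ p i := by
    by_contra h
    push_neg at h
    exact hne (funext h)
  obtain ⟨j, hj⟩ := hdiff
  -- midpoint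
  set m : Fin n → ℝ := fun i => (q i + p i) / 2 with hm
  have hm0 : ∀ i, 0 ≤ m i := fun i => by
    have := (hqpos i).le; have := (hppos i).le
    simp only [hm]; linarith
  have hm1 : ∑ i, m i = 1 := by
    simp only [hm]
    rw [← Finset.sum_div, Finset.sum_add_distrib, hq1, hp1]
    norm_num
  have hmg : ∑ i, m i • g i = 0 := by
    simp only [hm]
    rw [sum_div_smul g (fun i => q i + p i) 2, sum_add_smul g q p, hqg, hpg]
    simp
  have hmle : ∏ i, m i ≤ ∏ i, p i := hmax m hm0 hm1 hmg
  -- but (∏ m)^2 > (∏ p)^2, contradiction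
  have key : ∀ i, q i * p i ≤ (m i)^2 := by
    intro i
    simp only [hm]
    nlinarith [sq_nonneg (q i - p i)]
  have keyj : q j * p j < (m j)^2 := by
    simp only [hm]
    nlinarith [sq_abs (q j - p j), abs_pos.2 (sub_ne_zero.2 hj)]
  have hlt : ∏ i, (q i * p i) < ∏ i, (m i)^2 :=
    Finset.prod_lt_prod (fun i _ => mul_pos (hqpos i) (hppos i))
      (fun i _ => key i) ⟨j, Finset.mem_univ j, keyj⟩
  have h1 : ∏ i, (q i * p i) = (∏ i, p i)^2 := by
    rw [Finset.prod_mul_distrib, hqp, sq]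
  have h2 : ∏ i, (m i)^2 = (∏ i, m i)^2 := by
    rw [Finset.prod_pow]
  rw [h1, h2] at hlt
  have : ∏ i, p i < ∏ i, m i :=
    lt_of_pow_lt_pow_left₀ 2 (Finset.prod_nonneg fun i _ => hm0 i) hlt
  linarith
end

section
/- Let λ ∈ ℝ^r with λ = ‖λ‖ u, ‖u‖ = 1, and g_1,...,g_n ∈ ℝ^r with max_i ‖g_i‖ ≤ G and 1 + λ^T g_i > 0 for all i. If (1/n) ∑_i g_i/(1 + λ^T g_i) = 0, then ‖λ‖ (σ_min − (u^T ḡ) G) ≤ u^T ḡ, where ḡ = (1/n) ∑ g_i and σ_min is the smallest eigenvalue of S = (1/n) ∑ g_i g_i^T. -/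
open Finset

lemma rayleigh_min {r : ℕ} (S : Matrix (Fin r) (Fin r) ℝ) (hSh : S.IsHermitian)
    (u : EuclideanSpace ℝ (Fin r)) (hu : ‖u‖ = 1) :
    (⨅ k, hSh.eigenvalues k) ≤ ∑ j, u j * S.mulVec u j := by
  have hr : Nonempty (Fin r) := by
    by_contra h
    have hz : u = 0 := by ext i; exact absurd (Nonempty.intro i) h
    rw [hz, norm_zero] at hu; norm_num at hu
  set b := hSh.eigenvectorBasis with hb
  have hST : S.transpose = S := by
    have := hSh.eq
    simpa using this
  have key : ∑ j, u j * S.mulVec u j = ∑ k, hSh.eigenvalues k * (inner ℝ u (b k) : ℝ) ^ 2 := by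
    have h1 : ∑ j, u j * S.mulVec u j = (inner ℝ u ((EuclideanSpace.equiv (Fin r) ℝ).symm (S.mulVec u)) : ℝ) := by
      simp [PiLp.inner_apply, RCLike.inner_apply, mul_comm]
    rw [h1, ← OrthonormalBasis.sum_inner_mul_inner b]
    refine Finset.sum_congr rfl fun k _ => ?_
    have h2 : (inner ℝ (b k) ((EuclideanSpace.equiv (Fin r) ℝ).symm (S.mulVec u)) : ℝ)
        = dotProduct (b k) (S.mulVec u) := by
      simp [PiLp.inner_apply, RCLike.inner_apply, dotProduct, mul_comm]
    have h3 : dotProduct (b k) (S.mulVec u) = dotProduct (S.mulVec (b k)) u := by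
      rw [Matrix.dotProduct_mulVec, ← Matrix.mulVec_transpose, hST, dotProduct_comm]
    have h5 : dotProduct (S.mulVec (b k)) u = hSh.eigenvalues k * (inner ℝ (b k) u : ℝ) := by
      have hm := hSh.mulVec_eigenvectorBasis k
      rw [show S.mulVec (b k) = hSh.eigenvalues k • (b k : Fin r → ℝ) from hm]
      simp [dotProduct, PiLp.inner_apply, RCLike.inner_apply, Finset.mul_sum, mul_assoc, mul_comm, mul_left_comm]
    rw [h2, h3, h5, real_inner_comm (b k) u]
    ring
  rw [key]
  have hsum : ∑ k, (inner ℝ u (b k) : ℝ) ^ 2 = 1 := by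
    have h6 := OrthonormalBasis.sum_inner_mul_inner b u u
    rw [real_inner_self_eq_norm_sq, hu] at h6
    simp only [one_pow] at h6
    rw [← h6]
    refine Finset.sum_congr rfl fun k _ => ?_
    rw [real_inner_comm (b k) u]; ring
  calc (⨅ k, hSh.eigenvalues k) = ∑ k, (⨅ j, hSh.eigenvalues j) * (inner ℝ u (b k) : ℝ) ^ 2 := by
        rw [← Finset.mul_sum, hsum, mul_one]
    _ ≤ ∑ k, hSh.eigenvalues k * (inner ℝ u (b k) : ℝ) ^ 2 := by
        refine Finset.sum_le_sum fun k _ => ?_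
        exact mul_le_mul_of_nonneg_right (ciInf_le (Finite.bddBelow_range _) k) (sq_nonneg _)

/-- Key deterministic inequality bounding the empirical likelihood Lagrange multiplier:
if λ = ‖λ‖u with ‖u‖=1, max ‖gᵢ‖ ≤ G, 1+λᵀgᵢ > 0 and (1/n)∑ gᵢ/(1+λᵀgᵢ) = 0, then
‖λ‖(σ_min − (uᵀḡ)G) ≤ uᵀḡ, where σ_min is the smallest eigenvalue of S = (1/n)∑ gᵢgᵢᵀ. -/
theorem stmt4 {n r : ℕ} (hn : 0 < n) (g : Fin n → EuclideanSpace ℝ (Fin r))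
    (lam u : EuclideanSpace ℝ (Fin r)) (G : ℝ)
    (hu : ‖u‖ = 1) (hlam : lam = ‖lam‖ • u)
    (hG : ∀ i, ‖g i‖ ≤ G)
    (hpos : ∀ i, 0 < 1 + ∑ j, lam j * g i j)
    (hscore : (n : ℝ)⁻¹ • ∑ i, (1 + ∑ j, lam j * g i j)⁻¹ • g i = 0)
    (S : Matrix (Fin r) (Fin r) ℝ)
    (hS : S = fun j k => (n : ℝ)⁻¹ * ∑ i, g i j * g i k)
    (hSh : S.IsHermitian)
    (gbar : EuclideanSpace ℝ (Fin r)) (hgbar : gbar = (n : ℝ)⁻¹ • ∑ i, g i) :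
    ‖lam‖ * ((⨅ k, hSh.eigenvalues k) - (∑ j, u j * gbar j) * G) ≤ ∑ j, u j * gbar j := by
  set t : ℝ := ‖lam‖ with htdef
  set a : Fin n → ℝ := fun i => ∑ j, u j * g i j with hadef
  set w : Fin n → ℝ := fun i => ∑ j, lam j * g i j with hwdef
  have ht : 0 ≤ t := norm_nonneg _
  have hw : ∀ i, w i = t * a i := by
    intro i
    simp only [hwdef, hadef]
    rw [Finset.mul_sum]
    refine Finset.sum_congr rfl fun j _ => ?_
    rw [hlam]
    simp [mul_assoc]
  have ha : ∀ i, |a i| ≤ G := by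
    intro i
    have hinner : (inner ℝ u (g i) : ℝ) = a i := by
      simp [hadef, PiLp.inner_apply, RCLike.inner_apply, mul_comm]
    calc |a i| = |(inner ℝ u (g i) : ℝ)| := by rw [hinner]
      _ ≤ ‖u‖ * ‖g i‖ := abs_real_inner_le_norm u (g i)
      _ ≤ G := by rw [hu, one_mul]; exact hG i
  have hpos' : ∀ i, 0 < 1 + w i := hpos
  have hle : ∀ i, 1 + w i ≤ 1 + t * G := by
    intro i
    have : w i ≤ t * G := by
      rw [hw i]
      exact mul_le_mul_of_nonneg_left ((le_abs_self _).trans (ha i)) ht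
    linarith
  have hGpos : 0 < 1 + t * G := lt_of_lt_of_le (hpos' ⟨0, hn⟩) (hle ⟨0, hn⟩)
  have hnpos : (0 : ℝ) < (n : ℝ) := by exact_mod_cast hn
  -- score equation in direction u
  have hIP : ∀ v : EuclideanSpace ℝ (Fin r), (inner ℝ u v : ℝ) = ∑ j, u j * v j := by
    intro v
    simp [PiLp.inner_apply, RCLike.inner_apply, mul_comm]
  have haIP : ∀ i, (inner ℝ u (g i) : ℝ) = a i := fun i => hIP (g i)
  have hscore' : ∑ i, (1 + w i)⁻¹ * a i = 0 := by
    have h0 : (inner ℝ u (((n : ℝ)⁻¹ • ∑ i, (1 + w i)⁻¹ • g i : EuclideanSpace ℝ (Fin r))) : ℝ) = 0 := by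
      rw [hscore]
      exact inner_zero_right u
    rw [real_inner_smul_right, inner_sum] at h0
    simp only [real_inner_smul_right, haIP] at h0
    rcases mul_eq_zero.1 h0 with h | h
    · exact absurd h (by positivity)
    · exact h
  -- mean in direction u
  set m : ℝ := ∑ j, u j * gbar j with hmdef
  have hm : m = (n : ℝ)⁻¹ * ∑ i, a i := by
    rw [hmdef, ← hIP gbar, hgbar, real_inner_smul_right, inner_sum]
    simp only [haIP]
  -- key identity: m = n⁻¹ t ∑ aᵢ²/(1+wᵢ)
  have hid : ∀ i, a i = (1 + w i)⁻¹ * a i + t * ((1 + w i)⁻¹ * a i ^ 2) := by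
    intro i
    have hne : 1 + w i ≠ 0 := ne_of_gt (hpos' i)
    rw [hw i] at hne ⊢
    linear_combination (-a i) * inv_mul_cancel₀ hne
  have hmeq : m = (n : ℝ)⁻¹ * (t * ∑ i, (1 + w i)⁻¹ * a i ^ 2) := by
    rw [hm]
    congr 1
    calc ∑ i, a i = ∑ i, ((1 + w i)⁻¹ * a i + t * ((1 + w i)⁻¹ * a i ^ 2)) :=
          Finset.sum_congr rfl fun i _ => hid i
      _ = (∑ i, (1 + w i)⁻¹ * a i) + t * ∑ i, (1 + w i)⁻¹ * a i ^ 2 := by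
          rw [Finset.sum_add_distrib, Finset.mul_sum]
      _ = t * ∑ i, (1 + w i)⁻¹ * a i ^ 2 := by rw [hscore', zero_add]
  -- lower bound the sum
  have hbound : ∑ i, (1 + t * G)⁻¹ * a i ^ 2 ≤ ∑ i, (1 + w i)⁻¹ * a i ^ 2 := by
    refine Finset.sum_le_sum fun i _ => ?_
    exact mul_le_mul_of_nonneg_right (inv_anti₀ (hpos' i) (hle i)) (sq_nonneg _)
  -- quadratic form
  have hmv : ∀ j, S.mulVec u j = (n : ℝ)⁻¹ * ∑ i, a i * g i j := by
    intro j
    simp only [hS, Matrix.mulVec, dotProduct]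
    calc ∑ k, ((n : ℝ)⁻¹ * ∑ i, g i j * g i k) * u k
        = ∑ k, ∑ i, (n : ℝ)⁻¹ * (g i j * g i k * u k) := by
          refine Finset.sum_congr rfl fun k _ => ?_
          rw [Finset.mul_sum, Finset.sum_mul]
          refine Finset.sum_congr rfl fun i _ => ?_
          ring
      _ = ∑ i, ∑ k, (n : ℝ)⁻¹ * (g i j * g i k * u k) := Finset.sum_comm
      _ = (n : ℝ)⁻¹ * ∑ i, a i * g i j := by
          rw [Finset.mul_sum]
          refine Finset.sum_congr rfl fun i _ => ?_
          calc ∑ k, (n : ℝ)⁻¹ * (g i j * g i k * u k)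
              = ((n : ℝ)⁻¹ * g i j) * ∑ k, u k * g i k := by
                rw [Finset.mul_sum]
                refine Finset.sum_congr rfl fun k _ => ?_
                ring
            _ = (n : ℝ)⁻¹ * (a i * g i j) := by
                rw [show (∑ k, u k * g i k) = a i from rfl]; ring
  have hquad : (n : ℝ)⁻¹ * ∑ i, a i ^ 2 = ∑ j, u j * S.mulVec u j := by
    calc (n : ℝ)⁻¹ * ∑ i, a i ^ 2
        = ∑ i, a i * ((n : ℝ)⁻¹ * a i) := by
          rw [Finset.mul_sum]
          refine Finset.sum_congr rfl fun i _ => ?_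
          ring
      _ = ∑ j, u j * S.mulVec u j := by
          rw [show (∑ j, u j * S.mulVec u j) = ∑ j, ∑ i, u j * ((n : ℝ)⁻¹ * (a i * g i j)) by
            refine Finset.sum_congr rfl fun j _ => ?_
            rw [hmv j, Finset.mul_sum, Finset.mul_sum]]
          rw [Finset.sum_comm]
          refine Finset.sum_congr rfl fun i _ => ?_
          calc a i * ((n : ℝ)⁻¹ * a i)
              = ((n : ℝ)⁻¹ * a i) * ∑ j, u j * g i j := by
                rw [show (∑ j, u j * g i j) = a i from rfl]; ring
            _ = ∑ j, u j * ((n : ℝ)⁻¹ * (a i * g i j)) := by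
                rw [Finset.mul_sum]
                refine Finset.sum_congr rfl fun j _ => ?_
                ring
  set σ : ℝ := ⨅ k, hSh.eigenvalues k with hσdef
  have hray : σ ≤ (n : ℝ)⁻¹ * ∑ i, a i ^ 2 := by
    rw [hquad]; exact rayleigh_min S hSh u hu
  -- combine
  have hfin : t * (1 + t * G)⁻¹ * σ ≤ m := by
    calc t * (1 + t * G)⁻¹ * σ ≤ t * (1 + t * G)⁻¹ * ((n : ℝ)⁻¹ * ∑ i, a i ^ 2) := by
          refine mul_le_mul_of_nonneg_left hray ?_
          positivity
      _ = (n : ℝ)⁻¹ * (t * ∑ i, (1 + t * G)⁻¹ * a i ^ 2) := by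
          rw [show (∑ i, (1 + t * G)⁻¹ * a i ^ 2) = (1 + t * G)⁻¹ * ∑ i, a i ^ 2 from
            (Finset.mul_sum _ _ _).symm]
          ring
      _ ≤ (n : ℝ)⁻¹ * (t * ∑ i, (1 + w i)⁻¹ * a i ^ 2) := by
          refine mul_le_mul_of_nonneg_left (mul_le_mul_of_nonneg_left hbound ht) ?_
          positivity
      _ = m := hmeq.symm
  have h2 : (t * (1 + t * G)⁻¹ * σ) * (1 + t * G) ≤ m * (1 + t * G) :=
    mul_le_mul_of_nonneg_right hfin hGpos.le
  have h3 : (t * (1 + t * G)⁻¹ * σ) * (1 + t * G) = t * σ := by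
    field_simp
  rw [h3] at h2
  nlinarith [h2]
end

section
/- Let g : Ω → ℝ^r be a random vector with E g = 0 and Σ = E(g g^T) invertible, and let m = A g for a fixed q×r matrix A be such that E(m m^T) = A Σ A^T is invertible. Let D = A D_g where D_g is any r×q matrix. Then D_g^T Σ^{-1} D_g − D^T (A Σ A^T)^{-1} D is positive semidefinite; i.e., any q-dimensional linear combination of the estimating functions yields an asymptotic information matrix no larger than that of the full set. -/
open Matrix

/-- Optimality of the full constraint set (Qin–Lawless): for Σ positive definite, A a q×r
matrix with AΣ·Aᵀ invertible, and any r×q matrix D_g, the difference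
D_gᵀ Σ⁻¹ D_g − (A D_g)ᵀ (A Σ Aᵀ)⁻¹ (A D_g) is positive semidefinite. -/
theorem stmt6 {r q : ℕ} (Sig : Matrix (Fin r) (Fin r) ℝ) (hSig : Sig.PosDef)
    (A : Matrix (Fin q) (Fin r) ℝ) (hA : IsUnit (A * Sig * Aᵀ).det)
    (Dg : Matrix (Fin r) (Fin q) ℝ) :
    (Dgᵀ * Sig⁻¹ * Dg - (A * Dg)ᵀ * (A * Sig * Aᵀ)⁻¹ * (A * Dg)).PosSemidef := by
  set W : Matrix (Fin q) (Fin q) ℝ := A * Sig * Aᵀ with hW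
  set Z : Matrix (Fin r) (Fin q) ℝ := Sig⁻¹ * Dg - Aᵀ * W⁻¹ * (A * Dg) with hZ
  have hSd : IsUnit Sig.det := isUnit_iff_ne_zero.2 hSig.det_pos.ne'
  have h1 : Sig⁻¹ * Sig = 1 := nonsing_inv_mul _ hSd
  have h2 : Sig * Sig⁻¹ = 1 := mul_nonsing_inv _ hSd
  have h3 : W⁻¹ * W = 1 := nonsing_inv_mul _ hA
  have h4 : W * W⁻¹ = 1 := mul_nonsing_inv _ hA
  have hSt : Sigᵀ = Sig := by
    have := hSig.isHermitian.eq
    simpa [Matrix.conjTranspose_eq_transpose_of_trivial] using this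
  have hSim : Sig⁻¹ᵀ = Sig⁻¹ := by
    rw [Matrix.transpose_nonsing_inv, hSt]
  have hWsym : Wᵀ = W := by
    simp [hW, Matrix.transpose_mul, Matrix.mul_assoc, hSt]
  have hWim : W⁻¹ᵀ = W⁻¹ := by
    rw [Matrix.transpose_nonsing_inv, hWsym]
  have hss : ∀ (X : Matrix (Fin r) (Fin q) ℝ), Sig⁻¹ * (Sig * X) = X := by
    intro X; rw [← Matrix.mul_assoc, h1, Matrix.one_mul]
  have hss' : ∀ (X : Matrix (Fin r) (Fin q) ℝ), Sig * (Sig⁻¹ * X) = X := by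
    intro X; rw [← Matrix.mul_assoc, h2, Matrix.one_mul]
  have hc : ∀ (X : Matrix (Fin q) (Fin q) ℝ),
      A * (Sig * (Aᵀ * (W⁻¹ * X))) = X := by
    intro X
    have e : A * (Sig * (Aᵀ * (W⁻¹ * X))) = (A * Sig * Aᵀ) * (W⁻¹ * X) := by
      simp [Matrix.mul_assoc]
    rw [e, ← hW, ← Matrix.mul_assoc, h4, Matrix.one_mul]
  have key : Zᵀ * Sig * Z =
      Dgᵀ * Sig⁻¹ * Dg - (A * Dg)ᵀ * W⁻¹ * (A * Dg) := by
    rw [hZ]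
    simp only [Matrix.transpose_sub, Matrix.transpose_mul, hSim, hWim,
      Matrix.transpose_transpose]
    simp only [Matrix.sub_mul, Matrix.mul_sub, Matrix.mul_assoc]
    simp only [hss, hss', hc]
    abel
  have hps : (Zᵀ * Sig * Z).PosSemidef := by
    have := hSig.posSemidef.conjTranspose_mul_mul_same Z
    simpa using this
  rw [← key]
  exact hps
end

section
/- Let m : Ω → ℝ^q be a square-integrable mean-zero random vector and let X, Z be as in the randomization setup with Z ⊥ X. Define m̃ = m − ∑_{k=0}^K (1_{Z=k} − π_k) E[m | Z=k, X]. Then E m̃ = 0, and for any function of the form h(Z,X) = ∑_{k=0}^K (1_{Z=k} − π_k) h_k(X) with each h_k square-integrable, E[(m̃)_j h(Z,X)] = E[m_j h(Z,X)] − E[h(Z,X) ∑_k (1_{Z=k}−π_k) E[m_j|Z=k,X]]; moreover, m̃ is the orthogonal projection residual of m onto the augmentation space spanned by the functions ∑_k (1_{Z=k}−π_k) h_k(X). -/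
open MeasureTheory ProbabilityTheory Finset

/-- The residual m̃ = m − ∑ₖ(1_{Z=k}−πₖ)E[m|Z=k,X] has mean zero and is orthogonal to the
augmentation space of functions ∑ₖ(1_{Z=k}−πₖ)hₖ(X) with square-integrable hₖ. -/
theorem stmt15 {Ω : Type*} [MeasurableSpace Ω] (μ : Measure Ω) [IsProbabilityMeasure μ]
    {K d q : ℕ} (Z : Ω → Fin (K + 1)) (X : Ω → (Fin d → ℝ))
    (hZ : Measurable Z) (hX : Measurable X) (hindep : IndepFun Z X μ)
    (pr : Fin (K + 1) → ℝ) (hpr : ∀ k, pr k = (μ {ω | Z ω = k}).toReal)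
    (hprpos : ∀ k, 0 < pr k ∧ pr k < 1)
    (m : Ω → Fin q → ℝ) (hm : Measurable m)
    (hmL2 : ∀ j, MemLp (fun ω => m ω j) 2 μ)
    (hmean : ∀ j, ∫ ω, m ω j ∂μ = 0)
    (e : Fin (K + 1) → Fin q → (Fin d → ℝ) → ℝ)
    (he : ∀ k j, Measurable (e k j))
    (heL2 : ∀ k j, MemLp (fun ω => e k j (X ω)) 2 μ)
    -- defining property of the conditional expectation E[m_j | Z = k, X]
    (hce : ∀ (k : Fin (K + 1)) (j : Fin q) (h : (Fin d → ℝ) → ℝ), Measurable h →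
      MemLp (fun ω => h (X ω)) 2 μ →
      ∫ ω, (if Z ω = k then (1 : ℝ) else 0) * m ω j * h (X ω) ∂μ =
        ∫ ω, (if Z ω = k then (1 : ℝ) else 0) * e k j (X ω) * h (X ω) ∂μ)
    (mt : Ω → Fin q → ℝ)
    (hmt : ∀ ω j, mt ω j =
      m ω j - ∑ k, ((if Z ω = k then (1 : ℝ) else 0) - pr k) * e k j (X ω)) :
    (∀ j, ∫ ω, mt ω j ∂μ = 0) ∧
    (∀ h : Fin (K + 1) → (Fin d → ℝ) → ℝ, (∀ k, Measurable (h k)) →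
      (∀ k, MemLp (fun ω => h k (X ω)) 2 μ) →
      ∀ j, ∫ ω, mt ω j *
          (∑ k, ((if Z ω = k then (1 : ℝ) else 0) - pr k) * h k (X ω)) ∂μ = 0) := by
  classical
  -- product of two L² functions is integrable
  have hmul : ∀ {f g : Ω → ℝ}, MemLp f 2 μ → MemLp g 2 μ →
      Integrable (fun ω => f ω * g ω) μ := by
    intro f g hf hg
    have h1 : MemLp (fun ω => f ω * g ω) 1 μ := by
      have := MemLp.smul (φ := f) hg hf (r := 1)
        (hpqr := ⟨by rw [ENNReal.inv_two_add_inv_two, inv_one]⟩)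
      exact this
    exact h1.integrable le_rfl
  have hindMeas : ∀ k, Measurable (fun ω => if Z ω = k then (1:ℝ) else 0) := fun k =>
    Measurable.ite (hZ (measurableSet_singleton k)) measurable_const measurable_const
  have hindL2 : ∀ k, MemLp (fun ω => if Z ω = k then (1:ℝ) else 0) 2 μ := fun k =>
    MemLp.of_bound (hindMeas k).aestronglyMeasurable 1
      (Filter.Eventually.of_forall fun ω => by split <;> simp)
  -- b k := 1_{Z=k} - pr k is in L²
  have hbL2 : ∀ k, MemLp (fun ω => (if Z ω = k then (1:ℝ) else 0) - pr k) 2 μ := fun k =>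
    (hindL2 k).sub (memLp_const (pr k))
  -- b k is bounded, so b k * (L²) is in L²
  have hbL2mul : ∀ (k) {f : Ω → ℝ}, MemLp f 2 μ →
      MemLp (fun ω => ((if Z ω = k then (1:ℝ) else 0) - pr k) * f ω) 2 μ := by
    intro k f hf
    have hb : MemLp (fun ω => (if Z ω = k then (1:ℝ) else 0) - pr k) ⊤ μ :=
      memLp_top_of_bound ((hindMeas k).sub measurable_const).aestronglyMeasurable (1 + |pr k|)
        (Filter.Eventually.of_forall fun ω => by
          have := abs_sub_abs_le_abs_sub (if Z ω = k then (1:ℝ) else 0) (pr k)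
          have h1 : |if Z ω = k then (1:ℝ) else 0| ≤ 1 := by split <;> simp
          have h2 : |(if Z ω = k then (1:ℝ) else 0) - pr k| ≤
              |if Z ω = k then (1:ℝ) else 0| + |pr k| := abs_sub _ _
          calc ‖(if Z ω = k then (1:ℝ) else 0) - pr k‖
              = |(if Z ω = k then (1:ℝ) else 0) - pr k| := rfl
            _ ≤ |if Z ω = k then (1:ℝ) else 0| + |pr k| := h2
            _ ≤ 1 + |pr k| := by linarith)
    have := MemLp.smul (r := 2) hf hb
    exact this
  -- independence: E[1_{Z=k} G(X)] = pr k ⬝ E[G(X)]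
  have hA : ∀ (k) (G : (Fin d → ℝ) → ℝ), Measurable G → Integrable (fun ω => G (X ω)) μ →
      ∫ ω, (if Z ω = k then (1:ℝ) else 0) * G (X ω) ∂μ = pr k * ∫ ω, G (X ω) ∂μ := by
    intro k G hG hGint
    have hIF : IndepFun (fun ω => if Z ω = k then (1:ℝ) else 0) (fun ω => G (X ω)) μ :=
      hindep.comp (measurable_of_finite (fun z : Fin (K+1) => if z = k then (1:ℝ) else 0)) hG
    have hint : Integrable (fun ω => if Z ω = k then (1:ℝ) else 0) μ :=
      (hindL2 k).integrable one_le_two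
    have hmulI := hIF.integral_mul_eq_mul_integral hint.aestronglyMeasurable hGint.aestronglyMeasurable
    have hik : ∫ ω, (if Z ω = k then (1:ℝ) else 0) ∂μ = pr k := by
      have hset : MeasurableSet {ω | Z ω = k} := hZ (measurableSet_singleton k)
      have hfun : (fun ω => if Z ω = k then (1:ℝ) else 0)
          = Set.indicator {ω | Z ω = k} (fun _ => (1:ℝ)) := by
        funext ω; by_cases hω : Z ω = k <;> simp [hω, Set.indicator]
      rw [hfun, integral_indicator_const _ hset, measureReal_def, hpr k, smul_eq_mul, mul_one]
    calc ∫ ω, (if Z ω = k then (1:ℝ) else 0) * G (X ω) ∂μ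
        = (∫ ω, (if Z ω = k then (1:ℝ) else 0) ∂μ) * ∫ ω, G (X ω) ∂μ := hmulI
      _ = pr k * ∫ ω, G (X ω) ∂μ := by rw [hik]
  -- conditional expectation property combined with independence
  have hCE : ∀ (k) (j) (g : (Fin d → ℝ) → ℝ), Measurable g → MemLp (fun ω => g (X ω)) 2 μ →
      ∫ ω, (if Z ω = k then (1:ℝ) else 0) * m ω j * g (X ω) ∂μ
        = pr k * ∫ ω, e k j (X ω) * g (X ω) ∂μ := by
    intro k j g hg hgL2
    rw [hce k j g hg hgL2]
    have hfun : (fun ω => (if Z ω = k then (1:ℝ) else 0) * e k j (X ω) * g (X ω))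
        = fun ω => (if Z ω = k then (1:ℝ) else 0) * (e k j (X ω) * g (X ω)) := by
      funext ω; ring
    rw [hfun]
    exact hA k (fun x => e k j x * g x) ((he k j).mul hg) (hmul (heL2 k j) hgL2)
  -- E[m_j g(X)] = ∑ₖ pr k E[e_{kj}(X) g(X)]
  have hM : ∀ (j) (g : (Fin d → ℝ) → ℝ), Measurable g → MemLp (fun ω => g (X ω)) 2 μ →
      ∫ ω, m ω j * g (X ω) ∂μ = ∑ k, pr k * ∫ ω, e k j (X ω) * g (X ω) ∂μ := by
    intro j g hg hgL2
    have hfun : (fun ω => m ω j * g (X ω))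
        = fun ω => ∑ k, (if Z ω = k then (1:ℝ) else 0) * m ω j * g (X ω) := by
      funext ω
      have hone : ∑ k, (if Z ω = k then (1:ℝ) else 0) = 1 := by simp
      rw [← Finset.sum_mul, ← Finset.sum_mul, hone, one_mul]
    rw [hfun, integral_finset_sum]
    · exact Finset.sum_congr rfl fun k _ => hCE k j g hg hgL2
    · intro k _
      have h1 : Integrable (fun ω => (if Z ω = k then (1:ℝ) else 0) * (m ω j * g (X ω))) μ :=
        Integrable.bdd_mul (hmul (hmL2 j) hgL2) (hindMeas k).aestronglyMeasurable
          (c := 1) (Filter.Eventually.of_forall fun ω => by split <;> simp)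
      simpa [mul_assoc] using h1
  refine ⟨?_, ?_⟩
  · -- mean zero
    intro j
    have heInt : ∀ k, Integrable (fun ω => e k j (X ω)) μ :=
      fun k => (heL2 k j).integrable one_le_two
    have hfun : (fun ω => mt ω j)
        = fun ω => m ω j - ∑ k, ((if Z ω = k then (1:ℝ) else 0) - pr k) * e k j (X ω) :=
      funext fun ω => hmt ω j
    have hintk : ∀ k, Integrable
        (fun ω => ((if Z ω = k then (1:ℝ) else 0) - pr k) * e k j (X ω)) μ :=
      fun k => hmul (hbL2 k) (heL2 k j)
    rw [hfun, integral_sub ((hmL2 j).integrable one_le_two)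
        (integrable_finset_sum _ fun k _ => hintk k), hmean j,
      integral_finset_sum _ fun k _ => hintk k]
    have hzero : ∀ k : Fin (K + 1),
        ∫ ω, ((if Z ω = k then (1:ℝ) else 0) - pr k) * e k j (X ω) ∂μ = 0 := by
      intro k
      have hfe : (fun ω => ((if Z ω = k then (1:ℝ) else 0) - pr k) * e k j (X ω))
          = fun ω => (if Z ω = k then (1:ℝ) else 0) * e k j (X ω) - pr k * e k j (X ω) := by
        funext ω; ring
      rw [hfe, integral_sub (by
            have := Integrable.bdd_mul (heInt k) (hindMeas k).aestronglyMeasurable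
              (c := 1) (Filter.Eventually.of_forall fun ω => by split <;> simp)
            exact this) ((heInt k).const_mul (pr k)),
        hA k (e k j) (he k j) (heInt k), integral_const_mul, sub_self]
    rw [Finset.sum_congr rfl fun k _ => hzero k]
    simp
  · -- orthogonality
    intro h hhMeas hhL2 j
    -- the key single-term computation
    have key : ∀ (l : Fin (K + 1)) (g : (Fin d → ℝ) → ℝ), Measurable g →
        MemLp (fun ω => g (X ω)) 2 μ →
        ∫ ω, mt ω j * (((if Z ω = l then (1:ℝ) else 0) - pr l) * g (X ω)) ∂μ = 0 := by
      intro l g hg hgL2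
      set E : Fin (K + 1) → ℝ := fun k => ∫ ω, e k j (X ω) * g (X ω) ∂μ with hE
      -- expand mt
      have hfun : (fun ω => mt ω j * (((if Z ω = l then (1:ℝ) else 0) - pr l) * g (X ω)))
          = fun ω => m ω j * (((if Z ω = l then (1:ℝ) else 0) - pr l) * g (X ω))
            - ∑ k, (((if Z ω = k then (1:ℝ) else 0) - pr k) * e k j (X ω))
                * (((if Z ω = l then (1:ℝ) else 0) - pr l) * g (X ω)) := by
        funext ω; rw [hmt ω j, sub_mul, Finset.sum_mul]
      have hint1 : Integrable (fun ω =>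
          m ω j * (((if Z ω = l then (1:ℝ) else 0) - pr l) * g (X ω))) μ :=
        hmul (hmL2 j) (hbL2mul l hgL2)
      have hint2 : ∀ k : Fin (K + 1), Integrable (fun ω =>
          (((if Z ω = k then (1:ℝ) else 0) - pr k) * e k j (X ω))
            * (((if Z ω = l then (1:ℝ) else 0) - pr l) * g (X ω))) μ :=
        fun k => hmul (hbL2mul k (heL2 k j)) (hbL2mul l hgL2)
      rw [hfun, integral_sub hint1 (integrable_finset_sum _ fun k _ => hint2 k),
        integral_finset_sum _ fun k _ => hint2 k]
      -- first term
      have hT1 : ∫ ω, m ω j * (((if Z ω = l then (1:ℝ) else 0) - pr l) * g (X ω)) ∂μ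
          = pr l * E l - pr l * ∑ k, pr k * E k := by
        have hsplit : (fun ω => m ω j * (((if Z ω = l then (1:ℝ) else 0) - pr l) * g (X ω)))
            = fun ω => (if Z ω = l then (1:ℝ) else 0) * m ω j * g (X ω)
              - pr l * (m ω j * g (X ω)) := by
          funext ω; ring
        have hi1 : Integrable (fun ω =>
            (if Z ω = l then (1:ℝ) else 0) * m ω j * g (X ω)) μ := by
          have := Integrable.bdd_mul (hmul (hmL2 j) hgL2) (hindMeas l).aestronglyMeasurable
            (c := 1) (Filter.Eventually.of_forall fun ω => by split <;> simp)
          simpa [mul_assoc] using this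
        rw [hsplit, integral_sub hi1 ((hmul (hmL2 j) hgL2).const_mul (pr l)),
          hCE l j g hg hgL2, integral_const_mul, hM j g hg hgL2]
      -- second terms
      have hT2 : ∀ k : Fin (K + 1),
          ∫ ω, (((if Z ω = k then (1:ℝ) else 0) - pr k) * e k j (X ω))
              * (((if Z ω = l then (1:ℝ) else 0) - pr l) * g (X ω)) ∂μ
            = (if k = l then pr k * E k else 0) - pr k * pr l * E k := by
        intro k
        have heg : Integrable (fun ω => e k j (X ω) * g (X ω)) μ := hmul (heL2 k j) hgL2
        have hik : ∀ t : Fin (K + 1), Integrable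
            (fun ω => (if Z ω = t then (1:ℝ) else 0) * (e k j (X ω) * g (X ω))) μ :=
          fun t => Integrable.bdd_mul heg (hindMeas t).aestronglyMeasurable
            (c := 1) (Filter.Eventually.of_forall fun ω => by split <;> simp)
        have hprod : (fun ω => (((if Z ω = k then (1:ℝ) else 0) - pr k) * e k j (X ω))
              * (((if Z ω = l then (1:ℝ) else 0) - pr l) * g (X ω))) = fun ω =>
            (if k = l then (1:ℝ) else 0) *
                ((if Z ω = k then (1:ℝ) else 0) * (e k j (X ω) * g (X ω)))
              - pr k * ((if Z ω = l then (1:ℝ) else 0) * (e k j (X ω) * g (X ω)))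
              - pr l * ((if Z ω = k then (1:ℝ) else 0) * (e k j (X ω) * g (X ω)))
              + pr k * pr l * (e k j (X ω) * g (X ω)) := by
          funext ω
          have hii : (if Z ω = k then (1:ℝ) else 0) * (if Z ω = l then (1:ℝ) else 0)
              = (if k = l then (1:ℝ) else 0) * (if Z ω = k then (1:ℝ) else 0) := by
            by_cases h1 : Z ω = k
            · rw [if_pos h1]
              by_cases h2 : Z ω = l
              · rw [if_pos h2, if_pos (h1.symm.trans h2)]
              · rw [if_neg h2, if_neg (fun hh : k = l => h2 (hh ▸ h1))]
                ring
            · rw [if_neg h1]; ring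
          linear_combination (e k j (X ω) * g (X ω)) * hii
        have i1 : Integrable (fun ω => (if k = l then (1:ℝ) else 0) *
            ((if Z ω = k then (1:ℝ) else 0) * (e k j (X ω) * g (X ω)))) μ :=
          (hik k).const_mul _
        have i2 : Integrable (fun ω => pr k *
            ((if Z ω = l then (1:ℝ) else 0) * (e k j (X ω) * g (X ω)))) μ :=
          (hik l).const_mul _
        have i3 : Integrable (fun ω => pr l *
            ((if Z ω = k then (1:ℝ) else 0) * (e k j (X ω) * g (X ω)))) μ :=
          (hik k).const_mul _
        have i4 : Integrable (fun ω => pr k * pr l * (e k j (X ω) * g (X ω))) μ :=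
          heg.const_mul _
        have i12 : Integrable (fun ω => (if k = l then (1:ℝ) else 0) *
            ((if Z ω = k then (1:ℝ) else 0) * (e k j (X ω) * g (X ω)))
            - pr k * ((if Z ω = l then (1:ℝ) else 0) * (e k j (X ω) * g (X ω)))) μ :=
          i1.sub i2
        have i123 : Integrable (fun ω => (if k = l then (1:ℝ) else 0) *
            ((if Z ω = k then (1:ℝ) else 0) * (e k j (X ω) * g (X ω)))
            - pr k * ((if Z ω = l then (1:ℝ) else 0) * (e k j (X ω) * g (X ω)))
            - pr l * ((if Z ω = k then (1:ℝ) else 0) * (e k j (X ω) * g (X ω)))) μ :=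
          i12.sub i3
        have hAk : ∫ ω, (if Z ω = k then (1:ℝ) else 0) * (e k j (X ω) * g (X ω)) ∂μ
            = pr k * E k := hA k (fun x => e k j x * g x) ((he k j).mul hg) heg
        have hAl : ∫ ω, (if Z ω = l then (1:ℝ) else 0) * (e k j (X ω) * g (X ω)) ∂μ
            = pr l * E k := hA l (fun x => e k j x * g x) ((he k j).mul hg) heg
        rw [hprod, integral_add i123 i4, integral_sub i12 i3, integral_sub i1 i2,
          integral_const_mul, integral_const_mul, integral_const_mul, integral_const_mul,
          hAk, hAl]
        by_cases hkl : k = l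
        · rw [if_pos hkl, if_pos hkl]; ring
        · rw [if_neg hkl, if_neg hkl]; ring

      rw [hT1, Finset.sum_congr rfl fun k _ => hT2 k, Finset.sum_sub_distrib,
        Finset.sum_ite_eq' Finset.univ l (fun k => pr k * E k)]
      simp only [Finset.mem_univ, if_pos]
      have : ∑ k, pr k * pr l * E k = pr l * ∑ k, pr k * E k := by
        rw [Finset.mul_sum]; exact Finset.sum_congr rfl fun k _ => by ring
      rw [this]; ring
    -- sum up
    have hterm : ∀ k : Fin (K + 1), Integrable (fun ω =>
        mt ω j * (((if Z ω = k then (1:ℝ) else 0) - pr k) * h k (X ω))) μ := by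
      intro k
      have hmtL2 : MemLp (fun ω => mt ω j) 2 μ := by
        have hsum : MemLp (fun ω =>
            ∑ l, ((if Z ω = l then (1:ℝ) else 0) - pr l) * e l j (X ω)) 2 μ :=
          memLp_finset_sum _ fun l _ => hbL2mul l (heL2 l j)
        have := (hmL2 j).sub hsum
        have hfun : (fun ω => mt ω j) = fun ω =>
            m ω j - ∑ l, ((if Z ω = l then (1:ℝ) else 0) - pr l) * e l j (X ω) :=
          funext fun ω => hmt ω j
        rw [hfun]; exact this
      exact hmul hmtL2 (hbL2mul k (hhL2 k))
    have hfun : (fun ω => mt ω j * ∑ k, ((if Z ω = k then (1:ℝ) else 0) - pr k) * h k (X ω))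
        = fun ω => ∑ k, mt ω j * (((if Z ω = k then (1:ℝ) else 0) - pr k) * h k (X ω)) := by
      funext ω; rw [Finset.mul_sum]
    rw [hfun, integral_finset_sum _ fun k _ => hterm k,
      Finset.sum_congr rfl fun k _ => key k (h k) (hhMeas k) (hhL2 k)]
    simp
end

section
/- Let g_1,...,g_n ∈ ℝ^r with ‖g_i‖ ≤ G for all i, and let λ ∈ ℝ^r with ‖λ‖ G < 1. Then 2 ∑_{i=1}^n log(1 + λ^T g_i) = 2n λ^T ḡ − n λ^T S λ + R, with |R| ≤ (2n/3) ‖λ‖³ G³/(1 − ‖λ‖G), where ḡ = n^{-1}∑ g_i and S = n^{-1}∑ g_i g_i^T. -/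
open Finset intervalIntegral

lemma log_taylor_bound {a x : ℝ} (ha : a < 1) (hx : |x| ≤ a) :
    |Real.log (1 + x) - (x - x ^ 2 / 2)| ≤ a ^ 3 / (3 * (1 - a)) := by
  have ha0 : 0 ≤ a := le_trans (abs_nonneg x) hx
  have h1a : 0 < 1 - a := by linarith
  obtain ⟨hx1, hx2⟩ := abs_le.1 hx
  have hmem : ∀ t ∈ Set.uIcc (0:ℝ) x, 1 - a ≤ 1 + t := by
    intro t ht
    rcases Set.mem_uIcc.1 ht with ⟨h1, h2⟩ | ⟨h1, h2⟩ <;> linarith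
  have hpos : ∀ t ∈ Set.uIcc (0:ℝ) x, 0 < 1 + t :=
    fun t ht => lt_of_lt_of_le h1a (hmem t ht)
  set f : ℝ → ℝ := fun t => 1 / (1 + t) - (1 - t) with hf
  have hderiv : ∀ t ∈ Set.uIcc (0:ℝ) x,
      HasDerivAt (fun u => Real.log (1 + u) - (u - u ^ 2 / 2)) (f t) t := by
    intro t ht
    have h1 : HasDerivAt (fun u : ℝ => 1 + u) 1 t := (hasDerivAt_id t).const_add 1
    have h2 : HasDerivAt (fun u : ℝ => Real.log (1 + u)) (1 / (1 + t)) t := by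
      simpa using h1.log (ne_of_gt (hpos t ht))
    have h3 : HasDerivAt (fun u : ℝ => u - u ^ 2 / 2) (1 - t) t := by
      exact ((hasDerivAt_id' (x := t)).sub ((hasDerivAt_pow 2 t).div_const 2)).congr_deriv
        (by norm_num)
    exact h2.sub h3
  have hcont : ContinuousOn f (Set.uIcc 0 x) := by
    apply ContinuousOn.sub
    · exact continuousOn_const.div (by fun_prop) (fun t ht => ne_of_gt (hpos t ht))
    · fun_prop
  have hint : IntervalIntegrable f MeasureTheory.volume 0 x := hcont.intervalIntegrable
  have heq : ∫ t in (0:ℝ)..x, f t = Real.log (1 + x) - (x - x ^ 2 / 2) := by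
    have := intervalIntegral.integral_eq_sub_of_hasDerivAt hderiv hint
    simpa using this
  have hbound : ∀ t ∈ Set.uIoc (0:ℝ) x, ‖f t‖ ≤ t ^ 2 / (1 - a) := by
    intro t ht
    have ht' : t ∈ Set.uIcc (0:ℝ) x := Set.uIoc_subset_uIcc ht
    have h1t : 0 < 1 + t := hpos t ht'
    have hfe : f t = t ^ 2 / (1 + t) := by
      simp only [hf]
      rw [eq_div_iff h1t.ne']
      have h1 : 1 / (1 + t) * (1 + t) = 1 := by rw [one_div, inv_mul_cancel₀ h1t.ne']
      linear_combination h1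
    rw [hfe, Real.norm_eq_abs, abs_of_nonneg (by positivity)]
    gcongr
    exact hmem t ht'
  have hg : IntervalIntegrable (fun t : ℝ => t ^ 2 / (1 - a)) MeasureTheory.volume 0 x := by
    apply Continuous.intervalIntegrable
    fun_prop
  have hmain : ‖∫ t in (0:ℝ)..x, f t‖ ≤ |∫ t in (0:ℝ)..x, t ^ 2 / (1 - a)| :=
    intervalIntegral.norm_integral_le_abs_of_norm_le
      ((MeasureTheory.ae_restrict_iff' measurableSet_uIoc).2
        (MeasureTheory.ae_of_all _ hbound)) hg
  have hcomp : ∫ t in (0:ℝ)..x, t ^ 2 / (1 - a) = x ^ 3 / 3 / (1 - a) := by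
    rw [intervalIntegral.integral_div, integral_pow]
    norm_num
  rw [heq, Real.norm_eq_abs] at hmain
  calc |Real.log (1 + x) - (x - x ^ 2 / 2)| ≤ |x ^ 3 / 3 / (1 - a)| := by
        rw [← hcomp]; exact hmain
    _ = |x| ^ 3 / (3 * (1 - a)) := by
        rw [abs_div, abs_div, abs_of_pos h1a, abs_pow,
          show |(3:ℝ)| = 3 from by norm_num]
        field_simp
    _ ≤ a ^ 3 / (3 * (1 - a)) := by gcongr

/-- Deterministic third-order Taylor expansion of the empirical log-likelihood ratio:
if ‖gᵢ‖ ≤ G and ‖λ‖G < 1, then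
2∑log(1+λᵀgᵢ) = 2nλᵀḡ − nλᵀSλ + R with |R| ≤ (2n/3)‖λ‖³G³/(1−‖λ‖G). -/
theorem stmt18 {n r : ℕ} (hn : 0 < n) (g : Fin n → EuclideanSpace ℝ (Fin r))
    (lam : EuclideanSpace ℝ (Fin r)) (G : ℝ)
    (hG : ∀ i, ‖g i‖ ≤ G) (hsmall : ‖lam‖ * G < 1) :
    |2 * ∑ i, Real.log (1 + ∑ j, lam j * g i j) -
        (2 * ∑ i, (∑ j, lam j * g i j) - ∑ i, (∑ j, lam j * g i j) ^ 2)| ≤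
      (2 * n / 3) * ‖lam‖ ^ 3 * G ^ 3 / (1 - ‖lam‖ * G) := by
  set a := ‖lam‖ * G with hadef
  have h1a : 0 < 1 - a := by linarith
  have hx : ∀ i, |∑ j, lam j * g i j| ≤ a := by
    intro i
    have h1 : ∑ j, lam j * g i j = (inner ℝ lam (g i) : ℝ) := by
      rw [PiLp.inner_apply]
      simp [mul_comm]
    rw [h1]
    calc |(inner ℝ lam (g i) : ℝ)| ≤ ‖lam‖ * ‖g i‖ := abs_real_inner_le_norm _ _
      _ ≤ a := mul_le_mul_of_nonneg_left (hG i) (norm_nonneg lam)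
  have key : ∀ i : Fin n,
      |Real.log (1 + ∑ j, lam j * g i j) -
        ((∑ j, lam j * g i j) - (∑ j, lam j * g i j) ^ 2 / 2)| ≤ a ^ 3 / (3 * (1 - a)) :=
    fun i => log_taylor_bound hsmall (hx i)
  have hsum : 2 * ∑ i, Real.log (1 + ∑ j, lam j * g i j) -
      (2 * ∑ i, (∑ j, lam j * g i j) - ∑ i, (∑ j, lam j * g i j) ^ 2)
      = 2 * ∑ i, (Real.log (1 + ∑ j, lam j * g i j) -
          ((∑ j, lam j * g i j) - (∑ j, lam j * g i j) ^ 2 / 2)) := by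
    rw [Finset.sum_sub_distrib, Finset.sum_sub_distrib, ← Finset.sum_div]
    ring
  rw [hsum, abs_mul, abs_two]
  have h2 : |∑ i, (Real.log (1 + ∑ j, lam j * g i j) -
      ((∑ j, lam j * g i j) - (∑ j, lam j * g i j) ^ 2 / 2))| ≤ n * (a ^ 3 / (3 * (1 - a))) := by
    calc |∑ i, (Real.log (1 + ∑ j, lam j * g i j) -
        ((∑ j, lam j * g i j) - (∑ j, lam j * g i j) ^ 2 / 2))|
        ≤ ∑ i, |Real.log (1 + ∑ j, lam j * g i j) -
          ((∑ j, lam j * g i j) - (∑ j, lam j * g i j) ^ 2 / 2)| :=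
        Finset.abs_sum_le_sum_abs _ _
      _ ≤ ∑ _i : Fin n, a ^ 3 / (3 * (1 - a)) := Finset.sum_le_sum fun i _ => key i
      _ = n * (a ^ 3 / (3 * (1 - a))) := by simp [Finset.sum_const, mul_comm]
  calc 2 * |∑ i, (Real.log (1 + ∑ j, lam j * g i j) -
      ((∑ j, lam j * g i j) - (∑ j, lam j * g i j) ^ 2 / 2))|
      ≤ 2 * (n * (a ^ 3 / (3 * (1 - a)))) := by linarith
    _ = (2 * n / 3) * ‖lam‖ ^ 3 * G ^ 3 / (1 - a) := by
      rw [hadef]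
      field_simp
end
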